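/- Let (μ_n) be a sequence of finite Borel measures on [0,∞) with Laplace transforms μ̂_n(s) = ∫_{[0,∞)} e^{−sy} μ_n(dy). Suppose μ̂_n(s) → φ(s) for every s ≥ 0, where φ is positive and continuous on [0,∞). Then there is a finite measure μ on [0,∞) such that μ_n converges weakly to μ and μ̂ = φ. -/

import Mathlib

/-!
Push the `μ n` forward to `ℝ≥0`. The estimate `(1 - e^{-sR}) μ (R, ∞) ≤ μ̂ 0 - μ̂ s`, together
with the continuity of `φ` at `0`, makes the sequence tight, and its masses `μ̂ₙ 0` are bounded,
so by Prokhorov's theorem it is relatively compact for weak convergence. Every cluster point has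
Laplace transform `φ`. The functions `x ↦ e^{-sx}` span a point-separating algebra of bounded
continuous functions on `ℝ≥0`, so a finite measure on `ℝ≥0` is determined by its Laplace transform:
the cluster point is unique, and the whole sequence converges to it.
-/

open Filter Set Real MeasureTheory
open scoped NNReal ENNReal Topology BoundedContinuousFunction

noncomputable def expNegMul (s : ℝ≥0) : ℝ≥0 →ᵇ ℝ :=
  .ofNormedAddCommGroup (fun x => Real.exp (-s * x)) (by fun_prop) 1 fun x => by
    rw [Real.norm_eq_abs, abs_of_pos (Real.exp_pos _), Real.exp_le_one_iff, neg_mul, neg_nonpos]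
    exact mul_nonneg s.2 x.2

@[simp]
lemma expNegMul_apply (s x : ℝ≥0) : expNegMul s x = Real.exp (-s * x) := rfl

lemma expNegMul_add (s t : ℝ≥0) : expNegMul (s + t) = expNegMul s * expNegMul t := by
  ext x
  simp only [expNegMul_apply, BoundedContinuousFunction.coe_mul, Pi.mul_apply, ← Real.exp_add,
    NNReal.coe_add]
  ring_nf

lemma expNegMul_zero : expNegMul 0 = 1 := by
  ext x
  simp

noncomputable def expNegMulAlgebra : StarSubalgebra ℝ (ℝ≥0 →ᵇ ℝ) where
  toSubalgebra := (Submodule.span ℝ (range expNegMul)).toSubalgebra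
    (expNegMul_zero ▸ Submodule.subset_span (mem_range_self 0)) fun f g hf hg => by
      have hfg := Submodule.mul_mem_mul hf hg
      rw [Submodule.span_mul_span] at hfg
      refine Submodule.span_mono ?_ hfg
      rintro _ ⟨_, ⟨s, rfl⟩, _, ⟨t, rfl⟩, rfl⟩
      exact ⟨s + t, expNegMul_add s t⟩
  star_mem' hf := by
    convert hf
    ext x
    exact star_trivial _

lemma separatesPoints_expNegMulAlgebra :
    (expNegMulAlgebra.map (BoundedContinuousFunction.toContinuousMapStarₐ ℝ)).SeparatesPoints := by
  intro x y hxy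
  refine ⟨expNegMul 1, ⟨_, ⟨expNegMul 1, Submodule.subset_span (mem_range_self 1), rfl⟩, rfl⟩, ?_⟩
  simpa [NNReal.coe_inj] using hxy

namespace MeasureTheory

lemma integral_expNegMul_zero (μ : Measure ℝ≥0) : ∫ x, expNegMul 0 x ∂μ = μ.real univ := by
  simp

theorem Measure.ext_of_integral_expNegMul {μ ν : Measure ℝ≥0} [IsFiniteMeasure μ]
    [IsFiniteMeasure ν] (h : ∀ s, ∫ x, expNegMul s x ∂μ = ∫ x, expNegMul s x ∂ν) : μ = ν := by
  refine ext_of_forall_mem_subalgebra_integral_eq_of_polish separatesPoints_expNegMulAlgebra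
    fun g hg => ?_
  induction hg using Submodule.span_induction with
  | mem g hg => obtain ⟨s, rfl⟩ := hg; exact h s
  | zero => simp
  | add f g _ _ hf hg =>
    simp only [BoundedContinuousFunction.coe_add, Pi.add_apply]
    rw [integral_add (f.integrable _) (g.integrable _), integral_add (f.integrable _)
      (g.integrable _), hf, hg]
  | smul c f _ hf =>
    simp only [BoundedContinuousFunction.coe_smul, smul_eq_mul, integral_const_mul, hf]

lemma mul_measureReal_Ioi_le_sub_integral_expNegMul (μ : Measure ℝ≥0) [IsFiniteMeasure μ]
    (s R : ℝ≥0) :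
    (1 - Real.exp (-s * R)) * μ.real (Ioi R) ≤ μ.real univ - ∫ x, expNegMul s x ∂μ := by
  have hpoint : ∀ x, (Ioi R).indicator (fun _ => 1 - Real.exp (-s * R)) x ≤ 1 - expNegMul s x := by
    intro x
    by_cases hx : x ∈ Ioi R
    · rw [indicator_of_mem hx, expNegMul_apply, sub_le_sub_iff_left, Real.exp_le_exp]
      exact mul_le_mul_of_nonpos_left (by exact_mod_cast hx.out.le) (neg_nonpos.2 s.2)
    · rw [indicator_of_notMem hx, expNegMul_apply, sub_nonneg, Real.exp_le_one_iff, neg_mul,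
        neg_nonpos]
      exact mul_nonneg s.2 x.2
  calc (1 - Real.exp (-s * R)) * μ.real (Ioi R)
      = ∫ x, (Ioi R).indicator (fun _ => 1 - Real.exp (-s * R)) x ∂μ := by
        rw [integral_indicator_const _ measurableSet_Ioi, smul_eq_mul, mul_comm]
    _ ≤ ∫ x, (1 - expNegMul s x) ∂μ :=
        integral_mono ((integrable_const _).indicator measurableSet_Ioi)
          ((integrable_const 1).sub ((expNegMul s).integrable μ)) hpoint
    _ = μ.real univ - ∫ x, expNegMul s x ∂μ := by
        rw [integral_sub (integrable_const 1) ((expNegMul s).integrable μ)]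
        simp

theorem isTightMeasureSet_range_of_eventually {E : Type*} [MeasurableSpace E] [TopologicalSpace E]
    [TopologicalSpace.IsCompletelyPseudoMetrizableSpace E] [SecondCountableTopology E]
    [BorelSpace E] {μ : ℕ → Measure E} [∀ n, IsFiniteMeasure (μ n)]
    (h : ∀ ε : ℝ≥0∞, 0 < ε → ∃ K, IsCompact K ∧ ∀ᶠ n in atTop, μ n Kᶜ ≤ ε) :
    IsTightMeasureSet (range μ) := by
  rw [isTightMeasureSet_iff_exists_isCompact_measure_compl_le]
  intro ε hε
  obtain ⟨K, hK, hKμ⟩ := h ε hε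
  obtain ⟨N, hN⟩ := eventually_atTop.1 hKμ
  have hsingle : ∀ n, ∃ L, IsCompact L ∧ μ n Lᶜ ≤ ε := fun n => by
    obtain ⟨L, hL, hLμ⟩ := isTightMeasureSet_iff_exists_isCompact_measure_compl_le.1
      (isTightMeasureSet_singleton (μ := μ n)) ε hε
    exact ⟨L, hL, hLμ _ rfl⟩
  choose L hL hLμ using hsingle
  refine ⟨K ∪ ⋃ n ∈ Finset.range N, L n, hK.union (Finset.isCompact_biUnion _ fun n _ => hL n), ?_⟩
  rintro _ ⟨n, rfl⟩
  rcases lt_or_ge n N with hn | hn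
  · refine (measure_mono (compl_subset_compl.2 ?_)).trans (hLμ n)
    exact subset_union_of_subset_right (subset_biUnion_of_mem (Finset.mem_range.2 hn)) _
  · exact (measure_mono (compl_subset_compl.2 subset_union_left)).trans (hN n hn)

theorem isTightMeasureSet_range_of_tendsto_integral_expNegMul {μ : ℕ → Measure ℝ≥0}
    [∀ n, IsFiniteMeasure (μ n)] {φ : ℝ≥0 → ℝ} (hφ : ContinuousAt φ 0)
    (h : ∀ s, Tendsto (fun n => ∫ x, expNegMul s x ∂μ n) atTop (𝓝 (φ s))) :
    IsTightMeasureSet (range μ) := by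
  refine isTightMeasureSet_range_of_eventually fun ε hε => ?_
  rcases eq_or_ne ε ⊤ with rfl | hεtop
  · exact ⟨∅, isCompact_empty, .of_forall fun n => le_top⟩
  set η := ε.toReal
  have hη : 0 < η / 8 := by have := ENNReal.toReal_pos hε.ne' hεtop; positivity
  obtain ⟨s, hφs, hs⟩ : ∃ s, dist (φ s) (φ 0) < η / 8 ∧ 0 < s :=
    ((hφ.eventually (Metric.ball_mem_nhds _ hη)).filter_mono nhdsWithin_le_nhds).and
      (eventually_mem_nhdsWithin (s := Ioi 0)) |>.exists
  refine ⟨Icc 0 s⁻¹, isCompact_Icc, ?_⟩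
  filter_upwards [Metric.tendsto_nhds.1 (h 0) _ hη, Metric.tendsto_nhds.1 (h s) _ hη]
    with n h0 hs'
  have hcompl : (Icc 0 s⁻¹)ᶜ = Ioi s⁻¹ := by ext; simp
  have hss : -(s : ℝ) * (s⁻¹ : ℝ≥0) = -1 := by
    rw [NNReal.coe_inv, neg_mul, mul_inv_cancel₀ (by exact_mod_cast hs.ne')]
  have htail := mul_measureReal_Ioi_le_sub_integral_expNegMul (μ n) s s⁻¹
  rw [hss, ← integral_expNegMul_zero] at htail
  rw [hcompl, ← ofReal_measureReal, ← ENNReal.ofReal_toReal hεtop]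
  refine ENNReal.ofReal_le_ofReal ?_
  rw [Real.dist_eq, abs_lt] at hφs h0 hs'
  -- `htail` bounds `(1 - e⁻¹) μₙ (s⁻¹, ∞)` by `3η/8`, and `1 - e⁻¹ > 1/2`.
  nlinarith [Real.exp_neg_one_lt_half, measureReal_nonneg (μ := μ n) (s := Ioi s⁻¹)]

theorem FiniteMeasure.isCompact_closure_of_isTightMeasureSet {E : Type*} [MeasurableSpace E]
    [TopologicalSpace E] [T2Space E] [BorelSpace E] {S : Set (FiniteMeasure E)} {C : ℝ≥0}
    (hmass : ∀ μ ∈ S, μ.mass ≤ C) (hS : IsTightMeasureSet {(μ : Measure E) | μ ∈ S}) :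
    IsCompact (closure S) := by
  obtain ⟨u, -, u_pos, u_lim⟩ :
      ∃ u : ℕ → ℝ≥0, StrictAnti u ∧ (∀ n, 0 < u n) ∧ Tendsto u atTop (𝓝 0) :=
    exists_seq_strictAnti_tendsto 0
  have hK : ∀ n, ∃ K : Set E, IsCompact K ∧ ∀ μ ∈ S, μ Kᶜ ≤ u n := fun n => by
    obtain ⟨K, hK, hKS⟩ := isTightMeasureSet_iff_exists_isCompact_measure_compl_le.1 hS (u n)
      (mod_cast u_pos n)
    refine ⟨K, hK, fun μ hμ => ENNReal.coe_le_coe.1 ?_⟩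
    simpa using hKS _ ⟨μ, hμ, rfl⟩
  choose K hK hKS using hK
  -- Prokhorov's theorem in a T2 space wants monotone compacts: use `⋃ i ≤ n, K i`.
  refine IsCompact.closure_of_subset (isCompact_setOfPred_finiteMeasure_mass_le_compl_isCompact_le
    C u_lim (fun n => (finite_Iic n).isCompact_biUnion fun i _ => hK i)
    (Or.inr fun m n hmn => biUnion_subset_biUnion_left (Iic_subset_Iic.2 hmn))) ?_
  intro μ hμ
  refine ⟨hmass μ hμ, fun n => le_trans ?_ (hKS n μ hμ)⟩
  exact FiniteMeasure.apply_mono _ (compl_subset_compl.2 (subset_biUnion_of_mem (mem_Iic.2 le_rfl)))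

theorem FiniteMeasure.exists_tendsto_of_isCompact_closure_of_tendsto_integral_expNegMul
    {μ : ℕ → FiniteMeasure ℝ≥0} (hμ : IsCompact (closure (range μ))) {φ : ℝ≥0 → ℝ}
    (h : ∀ s, Tendsto (fun n => ∫ x, expNegMul s x ∂(μ n : Measure ℝ≥0)) atTop (𝓝 (φ s))) :
    ∃ μ₀ : FiniteMeasure ℝ≥0, Tendsto μ atTop (𝓝 μ₀) ∧
      ∀ s, ∫ x, expNegMul s x ∂(μ₀ : Measure ℝ≥0) = φ s := by
  have hcluster : ∀ ν, MapClusterPt ν atTop μ → ∀ s, ∫ x, expNegMul s x ∂(ν : Measure ℝ≥0) = φ s :=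
    fun ν hν s => eq_of_nhds_neBot <| ClusterPt.mono (hν.continuousAt_comp
      (f := fun ν : FiniteMeasure ℝ≥0 => ∫ x, expNegMul s x ∂(ν : Measure ℝ≥0))
      (FiniteMeasure.continuous_integral_boundedContinuousFunction _).continuousAt) (h s)
  have hmem : ∀ᶠ n in atTop, μ n ∈ closure (range μ) :=
    .of_forall fun n => subset_closure (mem_range_self n)
  obtain ⟨μ₀, -, hμ₀⟩ := hμ.exists_mapClusterPt (tendsto_principal.2 hmem)
  refine ⟨μ₀, hμ.tendsto_nhds_of_unique_mapClusterPt hmem fun ν _ hν => ?_, hcluster μ₀ hμ₀⟩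
  exact FiniteMeasure.toMeasure_injective <| Measure.ext_of_integral_expNegMul fun s => by
    rw [hcluster ν hν s, hcluster μ₀ hμ₀ s]

theorem FiniteMeasure.exists_tendsto_of_tendsto_integral_expNegMul {μ : ℕ → FiniteMeasure ℝ≥0}
    {φ : ℝ≥0 → ℝ} (hφ : ContinuousAt φ 0)
    (h : ∀ s, Tendsto (fun n => ∫ x, expNegMul s x ∂(μ n : Measure ℝ≥0)) atTop (𝓝 (φ s))) :
    ∃ μ₀ : FiniteMeasure ℝ≥0, Tendsto μ atTop (𝓝 μ₀) ∧
      ∀ s, ∫ x, expNegMul s x ∂(μ₀ : Measure ℝ≥0) = φ s := by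
  have htight : IsTightMeasureSet {(ν : Measure ℝ≥0) | ν ∈ range μ} := by
    have hset : {(ν : Measure ℝ≥0) | ν ∈ range μ} = range fun n => (μ n : Measure ℝ≥0) := by
      ext; simp
    rw [hset]
    exact isTightMeasureSet_range_of_tendsto_integral_expNegMul hφ h
  obtain ⟨B, hB⟩ := (h 0).bddAbove_range
  refine exists_tendsto_of_isCompact_closure_of_tendsto_integral_expNegMul
    (isCompact_closure_of_isTightMeasureSet (C := B.toNNReal) ?_ htight) h
  rintro _ ⟨n, rfl⟩
  refine NNReal.le_toNNReal_of_coe_le ?_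
  simpa [Measure.real, ← FiniteMeasure.ennreal_mass] using hB (mem_range_self n)

lemma Measure.map_coe_map_toNNReal {μ : Measure ℝ} (h : μ (Iio 0) = 0) :
    (μ.map Real.toNNReal).map ((↑) : ℝ≥0 → ℝ) = μ := by
  rw [Measure.map_map measurable_coe_nnreal_real measurable_real_toNNReal]
  have hae : (fun y => ((Real.toNNReal y : ℝ≥0) : ℝ)) =ᵐ[μ] id := by
    have hnonneg : ∀ᵐ y ∂μ, 0 ≤ y := measure_mono_null (fun y (hy : ¬0 ≤ y) => not_le.1 hy) h
    filter_upwards [hnonneg] with y hy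
    exact Real.coe_toNNReal y hy
  rw [Function.comp_def, Measure.map_congr hae, Measure.map_id]

lemma FiniteMeasure.integral_map_coe (ρ : FiniteMeasure ℝ≥0) {g : ℝ → ℝ} (hg : Continuous g) :
    ∫ y, g y ∂((ρ.map ((↑) : ℝ≥0 → ℝ) : FiniteMeasure ℝ) : Measure ℝ) =
      ∫ x, g x ∂(ρ : Measure ℝ≥0) := by
  rw [FiniteMeasure.toMeasure_map]
  exact integral_map measurable_coe_nnreal_real.aemeasurable hg.aestronglyMeasurable

end MeasureTheory

theorem stmt4_general
    (μ : ℕ → Measure ℝ)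
    (hfin : ∀ n, IsFiniteMeasure (μ n))
    (hsupp : ∀ n, μ n (Set.Iio 0) = 0)
    (φ : ℝ → ℝ)
    (hφ_cont : ContinuousOn φ (Set.Ici 0))
    (hconv : ∀ s : ℝ, 0 ≤ s →
      Tendsto (fun n => ∫ y, Real.exp (-s * y) ∂(μ n)) atTop (nhds (φ s))) :
    ∃ m : Measure ℝ, IsFiniteMeasure m ∧ m (Set.Iio 0) = 0 ∧
      (∀ f : ℝ → ℝ, Continuous f → (∃ C, ∀ x, |f x| ≤ C) →
        Tendsto (fun n => ∫ y, f y ∂(μ n)) atTop (nhds (∫ y, f y ∂m))) ∧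
      (∀ s : ℝ, 0 ≤ s → ∫ y, Real.exp (-s * y) ∂m = φ s) := by
  let ν : ℕ → FiniteMeasure ℝ≥0 := fun n => ⟨(μ n).map Real.toNNReal, inferInstance⟩
  have hνμ : ∀ n, (((ν n).map ((↑) : ℝ≥0 → ℝ) : FiniteMeasure ℝ) : Measure ℝ) = μ n :=
    fun n => by rw [FiniteMeasure.toMeasure_map]; exact Measure.map_coe_map_toNNReal (hsupp n)
  have hφ : ContinuousAt (fun s : ℝ≥0 => φ s) 0 :=
    (hφ_cont.comp_continuous NNReal.continuous_coe fun s => s.2).continuousAt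
  have hlap : ∀ s : ℝ≥0,
      Tendsto (fun n => ∫ x, expNegMul s x ∂(ν n : Measure ℝ≥0)) atTop (𝓝 (φ s)) := fun s => by
    have := hconv s s.2
    simp_rw [← hνμ, FiniteMeasure.integral_map_coe _ (by fun_prop : Continuous fun y => Real.exp (-s * y))] at this
    exact this
  obtain ⟨ν₀, hνν₀, hν₀⟩ := FiniteMeasure.exists_tendsto_of_tendsto_integral_expNegMul hφ hlap
  refine ⟨ν₀.map ((↑) : ℝ≥0 → ℝ), inferInstance, ?_, fun f hf ⟨C, hC⟩ => ?_, fun s hs => ?_⟩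
  · rw [FiniteMeasure.toMeasure_map, Measure.map_apply measurable_coe_nnreal_real measurableSet_Iio]
    convert measure_empty (μ := (ν₀ : Measure ℝ≥0))
    exact eq_empty_of_forall_notMem fun x hx => not_lt.2 x.2 hx
  · have := FiniteMeasure.tendsto_iff_forall_integral_tendsto.1
      (FiniteMeasure.tendsto_map_of_tendsto_of_continuous _ _ hνν₀ NNReal.continuous_coe)
      (.ofNormedAddCommGroup f hf C hC)
    simpa [hνμ] using this
  · rw [FiniteMeasure.integral_map_coe ν₀ (by fun_prop)]
    exact hν₀ ⟨s, hs⟩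

/-- Extended continuity theorem for Laplace transforms of finite measures on `[0,∞)`:
if the Laplace transforms of finite measures `μ_n` converge pointwise to a positive
continuous function `φ`, then `μ_n` converges weakly to a finite measure `μ` with
Laplace transform `φ`. -/
theorem stmt4
    (μ : ℕ → Measure ℝ)
    (hfin : ∀ n, IsFiniteMeasure (μ n))
    (hsupp : ∀ n, μ n (Set.Iio 0) = 0)
    (φ : ℝ → ℝ)
    (hφ_pos : ∀ s : ℝ, 0 ≤ s → 0 < φ s)
    (hφ_cont : ContinuousOn φ (Set.Ici 0))
    (hconv : ∀ s : ℝ, 0 ≤ s →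
      Tendsto (fun n => ∫ y, Real.exp (-s * y) ∂(μ n)) atTop (nhds (φ s))) :
    ∃ m : Measure ℝ, IsFiniteMeasure m ∧ m (Set.Iio 0) = 0 ∧
      (∀ f : ℝ → ℝ, Continuous f → (∃ C, ∀ x, |f x| ≤ C) →
        Tendsto (fun n => ∫ y, f y ∂(μ n)) atTop (nhds (∫ y, f y ∂m))) ∧
      (∀ s : ℝ, 0 ≤ s → ∫ y, Real.exp (-s * y) ∂m = φ s) :=
  stmt4_general μ hfin hsupp φ hφ_cont hconv
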